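/- arXiv:2410.08002 — 4 statements merged into one kernel-verified Lean document; each statement's English description precedes it below -/
import Mathlib

section
/- Let d ≥ 2. In the field ℂ(y_1,…,y_d), the following identities hold, expressing y_i, p_i, q_i as Laurent monomials in u_1,…,u_{3d−1}: y_1 = u_1 u_{2d+1}/u_{d+1}; y_i = u_i u_{2d+i}/(u_{2d+i−1} u_{d+i}) for 2 ≤ i ≤ d−1; y_d = u_d/(u_{2d} u_{3d−1}); p_1 = 1/u_{d+1}; p_i = 1/(u_{d+i} u_{2d+i−1}) for 2 ≤ i ≤ d−1; p_d = 1/(u_{2d} u_{3d−1}); q_1 = 1/(u_{d+1} u_{d+2}); q_i = 1/(u_{d+i} u_{d+i+1} u_{2d+i−1}) for 2 ≤ i ≤ d−1. -/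
noncomputable section

/-- The polynomial ring `ℂ[y_1, …, y_d]`. -/
abbrev PolyRing (d : ℕ) := MvPolynomial (Fin d) ℂ

/-- The field `ℂ(y_1, …, y_d)` of rational functions. -/
abbrev RatFld (d : ℕ) := FractionRing (PolyRing d)

/-- The rational function `y_k` (0-indexed; junk value `0` out of range). -/
def yy (d k : ℕ) : RatFld d :=
  if h : k < d then algebraMap (PolyRing d) (RatFld d) (MvPolynomial.X ⟨k, h⟩) else 0

/-- `p_k = 1 + y_k` (0-indexed). -/
def pp (d k : ℕ) : RatFld d := 1 + yy d k

/-- `q_k = 1 + y_k + y_k y_{k+1}` (0-indexed). -/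
def qq (d k : ℕ) : RatFld d := 1 + yy d k + yy d k * yy d (k + 1)

/-- The rational functions `u_1, …, u_{3d-1}` (0-indexed `r ∈ {0, …, 3d-2}`):
`u_i = y_i p_{i+1} / q_i` for `1 ≤ i ≤ d-1`, `u_d = y_d / p_d`, `u_{d+1} = 1/p_1`,
`u_{d+1+i} = p_i / q_i` for `1 ≤ i ≤ d-1`, and `u_{2d+i} = q_i / (p_i p_{i+1})`
for `1 ≤ i ≤ d-1`. -/
def uu (d r : ℕ) : RatFld d :=
  if r < d - 1 then yy d r * pp d (r + 1) / qq d r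
  else if r = d - 1 then yy d (d - 1) / pp d (d - 1)
  else if r = d then 1 / pp d 0
  else if r < 2 * d then pp d (r - d - 1) / qq d (r - d - 1)
  else qq d (r - 2 * d) / (pp d (r - 2 * d) * pp d (r - 2 * d + 1))

end

-- Auxiliary lemmas
set_option synthInstance.maxHeartbeats 1000000
set_option maxHeartbeats 2000000

lemma map_ne_aux (d : ℕ) (P : PolyRing d) (h : MvPolynomial.eval 0 P ≠ 0) :
    algebraMap (PolyRing d) (RatFld d) P ≠ 0 := by
  intro h0
  exact h (by rw [(IsFractionRing.to_map_eq_zero_iff (K := RatFld d)).mp h0, map_zero])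

lemma yy_ne (d k : ℕ) (h : k < d) : yy d k ≠ 0 := by
  rw [yy, dif_pos h]
  exact fun h0 => MvPolynomial.X_ne_zero _
    ((IsFractionRing.to_map_eq_zero_iff (K := RatFld d)).mp h0)

lemma pp_ne (d k : ℕ) : pp d k ≠ 0 := by
  rw [pp, yy]
  split
  · next h =>
    rw [show (1 : RatFld d) = algebraMap (PolyRing d) (RatFld d) 1 from
        (RingHom.map_one _).symm, ← RingHom.map_add]
    exact map_ne_aux d _ (by simp)
  · simp

lemma qq_ne (d k : ℕ) (h : k + 1 < d) : qq d k ≠ 0 := by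
  rw [qq, yy, yy, dif_pos h, dif_pos (by omega : k < d),
    show (1 : RatFld d) = algebraMap (PolyRing d) (RatFld d) 1 from
      (RingHom.map_one _).symm,
    ← RingHom.map_mul, ← RingHom.map_add, ← RingHom.map_add]
  exact map_ne_aux d _ (by simp)

lemma uu_low (d r : ℕ) (h : r < d - 1) :
    uu d r = yy d r * pp d (r + 1) / qq d r := by
  rw [uu, if_pos h]

lemma uu_dm1 (d : ℕ) (hd : 1 ≤ d) :
    uu d (d - 1) = yy d (d - 1) / pp d (d - 1) := by
  rw [uu, if_neg (by omega), if_pos rfl]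

lemma uu_d (d : ℕ) (hd : 1 ≤ d) : uu d d = 1 / pp d 0 := by
  rw [uu, if_neg (by omega), if_neg (by omega), if_pos rfl]

lemma uu_mid (d t : ℕ) (h1 : 1 ≤ t) (h2 : t < d) :
    uu d (d + t) = pp d (t - 1) / qq d (t - 1) := by
  rw [uu, if_neg (by omega), if_neg (by omega), if_neg (by omega), if_pos (by omega)]
  have e : d + t - d - 1 = t - 1 := by omega
  rw [e]

lemma uu_top (d t : ℕ) (hd : 1 ≤ d) :
    uu d (2 * d + t) = qq d t / (pp d t * pp d (t + 1)) := by
  rw [uu, if_neg (by omega), if_neg (by omega), if_neg (by omega), if_neg (by omega),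
    Nat.add_sub_cancel_left]

/-- For `d ≥ 2`, in the field `ℂ(y_1, …, y_d)` the elements `y_i, p_i, q_i` are Laurent
monomials in `u_1, …, u_{3d-1}` (0-indexed; in the 1-indexed notation of the paper:
`y_1 = u_1 u_{2d+1}/u_{d+1}`, `y_i = u_i u_{2d+i}/(u_{2d+i-1} u_{d+i})` for `2 ≤ i ≤ d-1`,
`y_d = u_d/(u_{2d} u_{3d-1})`, `p_1 = 1/u_{d+1}`, `p_i = 1/(u_{d+i} u_{2d+i-1})` for
`2 ≤ i ≤ d-1`, `p_d = 1/(u_{2d} u_{3d-1})`, `q_1 = 1/(u_{d+1} u_{d+2})`, and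
`q_i = 1/(u_{d+i} u_{d+i+1} u_{2d+i-1})` for `2 ≤ i ≤ d-1`). -/
theorem y_p_q_as_Laurent_monomials_in_u (d : ℕ) (hd : 2 ≤ d) :
    yy d 0 = uu d 0 * uu d (2 * d) / uu d d ∧
    (∀ t : ℕ, 1 ≤ t → t < d - 1 →
      yy d t = uu d t * uu d (2 * d + t) / (uu d (2 * d + t - 1) * uu d (d + t))) ∧
    yy d (d - 1) = uu d (d - 1) / (uu d (2 * d - 1) * uu d (3 * d - 2)) ∧
    pp d 0 = 1 / uu d d ∧
    (∀ t : ℕ, 1 ≤ t → t < d - 1 →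
      pp d t = 1 / (uu d (d + t) * uu d (2 * d + t - 1))) ∧
    pp d (d - 1) = 1 / (uu d (2 * d - 1) * uu d (3 * d - 2)) ∧
    qq d 0 = 1 / (uu d d * uu d (d + 1)) ∧
    (∀ t : ℕ, 1 ≤ t → t < d - 1 →
      qq d t = 1 / (uu d (d + t) * uu d (d + t + 1) * uu d (2 * d + t - 1))) := by
  refine ⟨?_, ?_, ?_, ?_, ?_, ?_, ?_, ?_⟩
  · have h20 : uu d (2 * d) = qq d 0 / (pp d 0 * pp d 1) := by
      simpa using uu_top d 0 (by omega)
    rw [uu_low d 0 (by omega), h20, uu_d d (by omega)]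
    field_simp [qq_ne d 0 (by omega), pp_ne d 0, pp_ne d 1]
  · intro t h1 h2
    rw [uu_low d t h2, uu_top d t (by omega),
      (by omega : 2 * d + t - 1 = 2 * d + (t - 1)), uu_top d (t - 1) (by omega),
      uu_mid d t h1 (by omega), (by omega : t - 1 + 1 = t)]
    field_simp [qq_ne d t (by omega), qq_ne d (t - 1) (by omega),
      pp_ne d t, pp_ne d (t - 1), pp_ne d (t + 1)]
  · rw [uu_dm1 d (by omega), (by omega : 2 * d - 1 = d + (d - 1)),
      uu_mid d (d - 1) (by omega) (by omega), (by omega : 3 * d - 2 = 2 * d + (d - 2)),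
      uu_top d (d - 2) (by omega), (by omega : d - 1 - 1 = d - 2),
      (by omega : d - 2 + 1 = d - 1)]
    field_simp [qq_ne d (d - 2) (by omega), pp_ne d (d - 2), pp_ne d (d - 1)]
  · rw [uu_d d (by omega), one_div_one_div]
  · intro t h1 h2
    rw [uu_mid d t h1 (by omega), (by omega : 2 * d + t - 1 = 2 * d + (t - 1)),
      uu_top d (t - 1) (by omega), (by omega : t - 1 + 1 = t)]
    field_simp [qq_ne d (t - 1) (by omega), pp_ne d t, pp_ne d (t - 1)]
  · rw [(by omega : 2 * d - 1 = d + (d - 1)), uu_mid d (d - 1) (by omega) (by omega),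
      (by omega : 3 * d - 2 = 2 * d + (d - 2)), uu_top d (d - 2) (by omega),
      (by omega : d - 1 - 1 = d - 2), (by omega : d - 2 + 1 = d - 1)]
    field_simp [qq_ne d (d - 2) (by omega), pp_ne d (d - 2), pp_ne d (d - 1)]
  · have h1 : uu d (d + 1) = pp d 0 / qq d 0 := by
      simpa using uu_mid d 1 (by omega) (by omega)
    rw [uu_d d (by omega), h1]
    field_simp [qq_ne d 0 (by omega), pp_ne d 0]
  · intro t h1 h2
    rw [uu_mid d t h1 (by omega), (by omega : d + t + 1 = d + (t + 1)),
      uu_mid d (t + 1) (by omega) (by omega), (by omega : t + 1 - 1 = t),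
      (by omega : 2 * d + t - 1 = 2 * d + (t - 1)), uu_top d (t - 1) (by omega),
      (by omega : t - 1 + 1 = t)]
    field_simp [qq_ne d t (by omega), qq_ne d (t - 1) (by omega),
      pp_ne d t, pp_ne d (t - 1)]
end

section
/- Let d ≥ 1 and let S ⊆ {1,…,3d−1}. There exists a point x ∈ ℂ^{3d−1} satisfying R_i(x) = 0 for all i ∈ {1,…,3d−1} and x_k = 0 for all k ∈ S if and only if no two elements of S are incompatible (i.e., S is a face of the flag complex of the pellytope's normal fan). -/
/-- Half of the incompatibility relation of the pellytope, 0-indexed. In the 1-indexed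
notation of the paper the incompatible pairs are exactly `{i, d+i}` for `1 ≤ i ≤ d`,
`{i, d+i+1}` for `1 ≤ i ≤ d-1`, `{i+1, 2d+i}` for `1 ≤ i ≤ d-1`, `{d+i, 2d+i}` for
`1 ≤ i ≤ d-1`, and `{2d+i, 2d+i+1}` for `1 ≤ i ≤ d-2`. -/
def IncompBase (d i j : ℕ) : Prop :=
  (i < d ∧ j = d + i) ∨
  (i < d - 1 ∧ j = d + i + 1) ∨
  (1 ≤ i ∧ i < d ∧ j = 2 * d + i - 1) ∨
  (d ≤ i ∧ i < 2 * d - 1 ∧ j = d + i) ∨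
  (2 * d ≤ i ∧ i < 3 * d - 2 ∧ j = i + 1)

/-- The (symmetric) incompatibility relation `≁` of the pellytope, 0-indexed. -/
def Incomp (d i j : ℕ) : Prop := IncompBase d i j ∨ IncompBase d j i

instance (d i j : ℕ) : Decidable (Incomp d i j) := by
  unfold Incomp IncompBase; infer_instance

open MvPolynomial in
/-- The u-equations `R_i = x_i + ∏_{j ≁ i} x_j − 1` of the pellytope, as polynomials in
`ℂ[x_1, …, x_{3d-1}]`. -/
noncomputable def uEqn (d : ℕ) (i : Fin (3 * d - 1)) : MvPolynomial (Fin (3 * d - 1)) ℂ :=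
  X i + (∏ j ∈ Finset.univ.filter (fun j : Fin (3 * d - 1) => Incomp d i.val j.val), X j) - 1

lemma incomp_irrefl (d i : ℕ) : ¬ Incomp d i i := by
  unfold Incomp IncompBase; omega

lemma incomp_symm {d i j : ℕ} (h : Incomp d i j) : Incomp d j i := h.elim Or.inr Or.inl

open MvPolynomial in
lemma eval_uEqn (d : ℕ) (i : Fin (3 * d - 1)) (x : Fin (3 * d - 1) → ℂ) :
    eval x (uEqn d i) =
      x i + (∏ j ∈ Finset.univ.filter
        (fun j : Fin (3 * d - 1) => Incomp d i.val j.val), x j) - 1 := by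
  simp [uEqn]

/-- For `d ≥ 1` and `S ⊆ {1, …, 3d-1}`, there is a point `x ∈ ℂ^{3d-1}` with `R_i(x) = 0`
for all `i` and `x_k = 0` for all `k ∈ S` if and only if no two elements of `S` are
incompatible (i.e. `S` is a face of the flag complex of the pellytope's normal fan). -/
theorem exists_solution_vanishing_on_S_iff (d : ℕ) (hd : 1 ≤ d)
    (S : Set (Fin (3 * d - 1))) :
    (∃ x : Fin (3 * d - 1) → ℂ,
        (∀ i : Fin (3 * d - 1), MvPolynomial.eval x (uEqn d i) = 0) ∧
          ∀ k ∈ S, x k = 0) ↔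
      ∀ i ∈ S, ∀ j ∈ S, ¬ Incomp d i.val j.val := by
  classical
  constructor
  · rintro ⟨x, hx, hS⟩ i hi j hj hij
    have h := hx i
    rw [eval_uEqn, hS i hi,
      Finset.prod_eq_zero (Finset.mem_filter.mpr ⟨Finset.mem_univ j, hij⟩) (hS j hj)] at h
    norm_num at h
  · intro hind
    -- collection of independent finsets containing S
    set P : Finset (Fin (3 * d - 1)) → Prop := fun T =>
      S.toFinset ⊆ T ∧ ∀ i ∈ T, ∀ j ∈ T, ¬ Incomp d i.val j.val with hP
    have hPdec : DecidablePred P := fun T => by unfold P; infer_instance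
    set 𝒮 : Finset (Finset (Fin (3 * d - 1))) := Finset.univ.filter P with h𝒮
    have hSmem : S.toFinset ∈ 𝒮 := by
      refine Finset.mem_filter.mpr ⟨Finset.mem_univ _, subset_refl _, ?_⟩
      intro i hi j hj
      exact hind i (Set.mem_toFinset.mp hi) j (Set.mem_toFinset.mp hj)
    obtain ⟨Z, hZ𝒮, hZmax⟩ := Finset.exists_max_image 𝒮 Finset.card ⟨_, hSmem⟩
    obtain ⟨hSZ, hZind⟩ := (Finset.mem_filter.mp hZ𝒮).2
    refine ⟨fun v => if v ∈ Z then 0 else 1, ?_, ?_⟩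
    · intro i
      rw [eval_uEqn]
      by_cases hiZ : i ∈ Z
      · rw [if_pos hiZ, Finset.prod_eq_one]
        · ring
        · intro j hj
          have hj' := (Finset.mem_filter.mp hj).2
          rw [if_neg]
          intro hjZ
          exact hZind i hiZ j hjZ hj'
      · rw [if_neg hiZ]
        -- there must be a neighbor of i in Z, else Z ∪ {i} is a larger independent set
        have : ∃ j ∈ Finset.univ.filter
            (fun j : Fin (3 * d - 1) => Incomp d i.val j.val), j ∈ Z := by
          by_contra hno
          push_neg at hno
          have hmem : insert i Z ∈ 𝒮 := by
            refine Finset.mem_filter.mpr ⟨Finset.mem_univ _,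
              hSZ.trans (Finset.subset_insert _ _), ?_⟩
            intro a ha b hb hab
            rcases Finset.mem_insert.mp ha with rfl | haZ
            · rcases Finset.mem_insert.mp hb with rfl | hbZ
              · exact incomp_irrefl d _ hab
              · exact hno b (Finset.mem_filter.mpr ⟨Finset.mem_univ _, hab⟩) hbZ
            · rcases Finset.mem_insert.mp hb with rfl | hbZ
              · exact hno a (Finset.mem_filter.mpr ⟨Finset.mem_univ _,
                  incomp_symm hab⟩) haZ
              · exact hZind a haZ b hbZ hab
          have := hZmax _ hmem
          rw [Finset.card_insert_of_notMem hiZ] at this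
          omega
        obtain ⟨j, hjf, hjZ⟩ := this
        have h0 : (if j ∈ Z then (0:ℂ) else 1) = 0 := if_pos hjZ
        rw [Finset.prod_eq_zero hjf h0]
        ring
    · intro k hk
      simp only []
      rw [if_pos (hSZ (Set.mem_toFinset.mpr hk))]
end

section
/- Suppose u ∈ ℂ^n satisfies the u-equations and u_k = 0 for all k ∈ S. Then: (1) u_j = 1 for every j ∉ S with j ∉ W_S (i.e., every j outside S that is incompatible with some element of S); and (2) for every i ∈ W_S one has u_i + ∏_{ℓ ∈ W_S, ℓ ≁ i} u_ℓ^{a_{iℓ}} = 1. -/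
/-- Let `≁` be a symmetric irreflexive incompatibility relation on `{1, …, n}` with
integer exponents `a_{ij} ≥ 1`, and suppose `u ∈ ℂ^n` satisfies the u-equations
`u_i + ∏_{j ≁ i} u_j^{a_{ij}} = 1` and `u_k = 0` for all `k ∈ S`. Then:
(1) `u_j = 1` for every `j ∉ S` with `j ∉ W_S` (i.e. every `j` outside `S` that is
incompatible with some element of `S`); and
(2) for every `i ∈ W_S` one has `u_i + ∏_{ℓ ∈ W_S, ℓ ≁ i} u_ℓ^{a_{iℓ}} = 1`,
where `W_S = {j ∉ S : j is compatible with every element of S}`. -/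
theorem u_equations_restrict_to_stratum (n : ℕ)
    (Rel : Fin n → Fin n → Prop) [DecidableRel Rel]
    (hsymm : ∀ i j, Rel i j → Rel j i) (hirrefl : ∀ i, ¬ Rel i i)
    (a : Fin n → Fin n → ℕ) (ha : ∀ i j, Rel i j → 1 ≤ a i j)
    (u : Fin n → ℂ) (S : Finset (Fin n))
    (hu : ∀ i, u i + ∏ j ∈ Finset.univ.filter (fun j => Rel i j), u j ^ a i j = 1)
    (hS : ∀ k ∈ S, u k = 0) :
    (∀ j, j ∉ S → (∃ k ∈ S, Rel j k) → u j = 1) ∧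
    (∀ i, i ∉ S → (∀ k ∈ S, ¬ Rel i k) →
      u i + ∏ j ∈ Finset.univ.filter
          (fun j => (j ∉ S ∧ ∀ k ∈ S, ¬ Rel j k) ∧ Rel i j),
        u j ^ a i j = 1) := by
  have h1 : ∀ j, j ∉ S → (∃ k ∈ S, Rel j k) → u j = 1 := by
    intro j hjS ⟨k, hkS, hjk⟩
    have hprod : ∏ l ∈ Finset.univ.filter (fun l => Rel j l), u l ^ a j l = 0 := by
      apply Finset.prod_eq_zero (i := k)
      · simp [hjk]
      · rw [hS k hkS]
        exact zero_pow (Nat.one_le_iff_ne_zero.mp (ha j k hjk))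
    have := hu j
    rw [hprod, add_zero] at this
    exact this
  refine ⟨h1, ?_⟩
  intro i hiS hiW
  have key : (∏ j ∈ Finset.univ.filter
        (fun j => (j ∉ S ∧ ∀ k ∈ S, ¬ Rel j k) ∧ Rel i j), u j ^ a i j)
      = ∏ j ∈ Finset.univ.filter (fun j => Rel i j), u j ^ a i j := by
    apply Finset.prod_subset
    · intro j hj
      simp only [Finset.mem_filter] at hj ⊢
      exact ⟨Finset.mem_univ j, hj.2.2⟩
    · intro j hj hj'
      simp only [Finset.mem_filter, Finset.mem_univ, true_and] at hj hj'
      have hij : Rel i j := hj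
      push_neg at hj'
      by_cases hjS : j ∈ S
      · exact absurd hij (hiW j hjS)
      · have hnw : ¬ (j ∉ S ∧ ∀ k ∈ S, ¬ Rel j k) := fun h => hj' h hij
        push_neg at hnw
        obtain ⟨k, hkS, hk⟩ := hnw hjS
        rw [h1 j hjS ⟨k, hkS, hk⟩, one_pow]
  rw [key]
  exact hu i
end

section
/- The pellytope 𝒫_d is a simple polytope: every extreme point of 𝒫_d belongs to exactly d of the 3d−1 facets F_1,…,F_{3d−1}, where F_j = {x ∈ 𝒫_d : ⟨V_j, x⟩ = min_{y ∈ 𝒫_d} ⟨V_j, y⟩}. -/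
open Pointwise

/-- The standard basis vector `e_i` of `ℝ^d` (0-indexed). -/
noncomputable def stdBasisVec (d i : ℕ) : Fin d → ℝ := fun k => if (k : ℕ) = i then 1 else 0

/-- The pellytope `𝒫_d`, the Minkowski sum
`∑_{i=1}^d Conv{0, e_i} + ∑_{j=1}^{d-1} Conv{0, e_j, e_j + e_{j+1}}` (0-indexed). -/
noncomputable def pellytope (d : ℕ) : Set (Fin d → ℝ) :=
  (∑ i ∈ Finset.range d, convexHull ℝ {0, stdBasisVec d i}) +
    ∑ j ∈ Finset.range (d - 1),
      convexHull ℝ {0, stdBasisVec d j, stdBasisVec d j + stdBasisVec d (j + 1)}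

/-- The primitive ray generators `V_1, …, V_{3d-1}` of the normal fan of the pellytope
(0-indexed): `e_1, …, e_d, -e_1, …, -e_d, e_1 - e_2, …, e_{d-1} - e_d`. -/
noncomputable def rayGen (d j : ℕ) : Fin d → ℝ := fun k =>
  if j < d then (if (k : ℕ) = j then 1 else 0)
  else if j < 2 * d then (if (k : ℕ) = j - d then -1 else 0)
  else (if (k : ℕ) = j - 2 * d then 1 else if (k : ℕ) = j - 2 * d + 1 then -1 else 0)

/-- The exposed face `F_j = {x ∈ 𝒫_d : ⟨V_j, x⟩ = min_{y ∈ 𝒫_d} ⟨V_j, y⟩}` of the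
pellytope minimizing the linear functional `⟨V_j, ·⟩`. -/
noncomputable def pellFace (d j : ℕ) : Set (Fin d → ℝ) :=
  {x ∈ pellytope d | ∀ y ∈ pellytope d, ∑ k, rayGen d j k * x k ≤ ∑ k, rayGen d j k * y k}

namespace PellProof

variable {d : ℕ}


variable {d : ℕ}

lemma e_ne_zero {i : ℕ} (hi : i < d) : stdBasisVec d i ≠ 0 := by
  intro h
  have := congrFun h ⟨i, hi⟩
  simp [stdBasisVec] at this

lemma eB_ne_zero {j : ℕ} (hj : j + 1 < d) :
    stdBasisVec d j + stdBasisVec d (j + 1) ≠ 0 := by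
  intro h
  have := congrFun h ⟨j, by omega⟩
  simp [stdBasisVec] at this

lemma e_ne_eB {j : ℕ} (hj : j + 1 < d) :
    stdBasisVec d j ≠ stdBasisVec d j + stdBasisVec d (j + 1) := by
  intro h
  have := congrFun h ⟨j + 1, hj⟩
  simp [stdBasisVec] at this

lemma memP (p q : ℕ → Fin d → ℝ)
    (hp : ∀ i < d, p i ∈ convexHull ℝ {0, stdBasisVec d i})
    (hq : ∀ j < d - 1, q j ∈
      convexHull ℝ {0, stdBasisVec d j, stdBasisVec d j + stdBasisVec d (j + 1)}) :
    ((∑ i ∈ Finset.range d, p i) + ∑ j ∈ Finset.range (d - 1), q j) ∈ pellytope d :=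
  Set.add_mem_add
    ((Set.mem_finset_sum _ _ _).2 ⟨p, fun {i} hi => hp i (Finset.mem_range.1 hi), rfl⟩)
    ((Set.mem_finset_sum _ _ _).2 ⟨q, fun {j} hj => hq j (Finset.mem_range.1 hj), rfl⟩)

lemma exists_decomp {x : Fin d → ℝ} (hx : x ∈ pellytope d) :
    ∃ p q : ℕ → Fin d → ℝ,
      (∀ i < d, p i ∈ convexHull ℝ {0, stdBasisVec d i}) ∧
      (∀ j < d - 1, q j ∈
        convexHull ℝ {0, stdBasisVec d j, stdBasisVec d j + stdBasisVec d (j + 1)}) ∧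
      (∑ i ∈ Finset.range d, p i) + (∑ j ∈ Finset.range (d - 1), q j) = x := by
  obtain ⟨s, hs, t, ht, hst⟩ := Set.mem_add.1 hx
  obtain ⟨p, hp, hps⟩ := (Set.mem_finset_sum _ _ _).1 hs
  obtain ⟨q, hq, hqt⟩ := (Set.mem_finset_sum _ _ _).1 ht
  exact ⟨p, q, fun i hi => hp (Finset.mem_range.2 hi),
    fun j hj => hq (Finset.mem_range.2 hj), by rw [hps, hqt, hst]⟩

section Extreme

variable {E : Type*} [AddCommGroup E] [Module ℝ E]

lemma extremePoints_add_left {A B : Set E} {a b : E} (ha : a ∈ A) (hb : b ∈ B)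
    (hx : a + b ∈ Set.extremePoints ℝ (A + B)) : a ∈ Set.extremePoints ℝ A := by
  refine ⟨ha, fun x₁ hx₁ x₂ hx₂ hseg => ?_⟩
  obtain ⟨t, s, ht, hs, hts, heq⟩ := hseg
  have key : t • (x₁ + b) + s • (x₂ + b) = a + b := by
    have h1 : t • (x₁ + b) + s • (x₂ + b) = (t • x₁ + s • x₂) + (t + s) • b := by module
    rw [h1, hts, one_smul, heq]
  have := hx.2 (Set.add_mem_add hx₁ hb) (Set.add_mem_add hx₂ hb)
    ⟨t, s, ht, hs, hts, key⟩
  exact add_right_cancel this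

lemma extremePoints_add_right {A B : Set E} {a b : E} (ha : a ∈ A) (hb : b ∈ B)
    (hx : a + b ∈ Set.extremePoints ℝ (A + B)) : b ∈ Set.extremePoints ℝ B := by
  refine extremePoints_add_left hb ha ?_
  rwa [add_comm b a, add_comm B A]

lemma extremePoints_finsetSum {ι : Type*} [DecidableEq ι] (s : Finset ι) (f : ι → Set E)
    {x : E} (hx : x ∈ Set.extremePoints ℝ (∑ i ∈ s, f i)) :
    ∃ g : ι → E, (∀ i ∈ s, g i ∈ Set.extremePoints ℝ (f i)) ∧ ∑ i ∈ s, g i = x := by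
  induction s using Finset.induction_on generalizing x with
  | empty =>
    have hx0 : x = 0 := by
      have := hx.1
      simpa [Set.mem_zero] using this
    exact ⟨fun _ => 0, by simp, by simp [hx0]⟩
  | insert i s hi ih =>
    rw [Finset.sum_insert hi] at hx
    obtain ⟨a, ha, y, hy, hxay⟩ := Set.mem_add.1 hx.1
    have hxe : a + y ∈ Set.extremePoints ℝ (f i + ∑ j ∈ s, f j) := by rwa [hxay]
    have ha' := extremePoints_add_left ha hy hxe
    have hy' := extremePoints_add_right ha hy hxe
    obtain ⟨g, hg, hgsum⟩ := ih hy'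
    refine ⟨Function.update g i a, fun j hj => ?_, ?_⟩
    · rcases Finset.mem_insert.1 hj with rfl | hj
      · simpa using ha'
      · rw [Function.update_of_ne (ne_of_mem_of_not_mem hj hi)]
        exact hg j hj
    · rw [Finset.sum_insert hi, Function.update_self]
      have : ∑ j ∈ s, Function.update g i a j = ∑ j ∈ s, g j :=
        Finset.sum_congr rfl fun j hj =>
          Function.update_of_ne (ne_of_mem_of_not_mem hj hi) _ _
      rw [this, hgsum, hxay]

end Extreme

lemma exists_vertex_decomp {x : Fin d → ℝ} (hx : x ∈ Set.extremePoints ℝ (pellytope d)) :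
    ∃ p q : ℕ → Fin d → ℝ,
      (∀ i < d, p i = 0 ∨ p i = stdBasisVec d i) ∧
      (∀ j < d - 1, q j = 0 ∨ q j = stdBasisVec d j ∨
        q j = stdBasisVec d j + stdBasisVec d (j + 1)) ∧
      (∑ i ∈ Finset.range d, p i) + (∑ j ∈ Finset.range (d - 1), q j) = x := by
  obtain ⟨s, hs, t, ht, hst⟩ := Set.mem_add.1 hx.1
  have hxe : s + t ∈ Set.extremePoints ℝ
      ((∑ i ∈ Finset.range d, convexHull ℝ {0, stdBasisVec d i}) +
        ∑ j ∈ Finset.range (d - 1),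
          convexHull ℝ {0, stdBasisVec d j, stdBasisVec d j + stdBasisVec d (j + 1)}) := by
    rw [hst]; exact hx
  have hs' := extremePoints_add_left hs ht hxe
  have ht' := extremePoints_add_right hs ht hxe
  obtain ⟨p, hp, hps⟩ := extremePoints_finsetSum _ _ hs'
  obtain ⟨q, hq, hqt⟩ := extremePoints_finsetSum _ _ ht'
  refine ⟨p, q, fun i hi => ?_, fun j hj => ?_, by rw [hps, hqt, hst]⟩
  · have := extremePoints_convexHull_subset (hp i (Finset.mem_range.2 hi))
    simpa [Set.mem_insert_iff] using this
  · have := extremePoints_convexHull_subset (hq j (Finset.mem_range.2 hj))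
    simpa [Set.mem_insert_iff] using this



variable {d : ℕ}

/-- the linear functional given by `v`. -/
noncomputable def phi (v y : Fin d → ℝ) : ℝ := ∑ k, v k * y k

lemma phi_linear (v : Fin d → ℝ) : IsLinearMap ℝ (phi v) := by
  constructor
  · intro y z
    simp [phi, mul_add, Finset.sum_add_distrib]
  · intro c y
    simp only [phi, Pi.smul_apply, smul_eq_mul, Finset.mul_sum]
    exact Finset.sum_congr rfl fun _ _ => by ring

lemma phi_add (v y z : Fin d → ℝ) : phi v (y + z) = phi v y + phi v z :=
  (phi_linear v).map_add y z

lemma phi_zero (v : Fin d → ℝ) : phi v 0 = 0 := by simp [phi]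

lemma phi_sum {ι : Type*} (v : Fin d → ℝ) (t : Finset ι) (w : ι → Fin d → ℝ) :
    phi v (∑ i ∈ t, w i) = ∑ i ∈ t, phi v (w i) := by
  simp only [phi, Finset.sum_apply, Finset.mul_sum]
  exact Finset.sum_comm

lemma phi_conv_ge {v : Fin d → ℝ} {S : Set (Fin d → ℝ)} {m : ℝ}
    (hS : ∀ w ∈ S, m ≤ phi v w) {z : Fin d → ℝ} (hz : z ∈ convexHull ℝ S) :
    m ≤ phi v z :=
  convexHull_min hS (convex_halfSpace_ge (phi_linear v) m) hz

lemma phi_ray1 {j : ℕ} (hj : j < d) (y : Fin d → ℝ) :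
    phi (rayGen d j) y = y ⟨j, hj⟩ := by
  unfold phi rayGen
  simp only [if_pos hj]
  rw [Finset.sum_eq_single_of_mem ⟨j, hj⟩ (Finset.mem_univ _)]
  · simp
  · intro k _ hk
    have : (k : ℕ) ≠ j := fun h => hk (Fin.ext h)
    simp [this]

lemma phi_ray2 {j : ℕ} (hj1 : d ≤ j) (hj2 : j < 2 * d) (y : Fin d → ℝ) :
    phi (rayGen d j) y = -y ⟨j - d, by omega⟩ := by
  unfold phi rayGen
  simp only [if_neg (by omega : ¬ j < d), if_pos hj2]
  rw [Finset.sum_eq_single_of_mem ⟨j - d, by omega⟩ (Finset.mem_univ _)]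
  · simp
  · intro k _ hk
    have : (k : ℕ) ≠ j - d := fun h => hk (Fin.ext h)
    simp [this]

lemma phi_ray3 {j : ℕ} (hj1 : 2 * d ≤ j) (hj2 : j - 2 * d + 1 < d) (y : Fin d → ℝ) :
    phi (rayGen d j) y = y ⟨j - 2 * d, by omega⟩ - y ⟨j - 2 * d + 1, hj2⟩ := by
  unfold phi rayGen
  simp only [if_neg (by omega : ¬ j < d), if_neg (by omega : ¬ j < 2 * d)]
  set A : Fin d := ⟨j - 2 * d, by omega⟩
  set B : Fin d := ⟨j - 2 * d + 1, hj2⟩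
  have hAB : A ≠ B := by
    intro h
    have := congrArg Fin.val h
    simp [A, B] at this
  have hterm : ∀ k : Fin d,
      (if (k : ℕ) = j - 2 * d then (1:ℝ) else if (k : ℕ) = j - 2 * d + 1 then -1 else 0) * y k
      = (if k = A then y A else 0) + (if k = B then -y B else 0) := by
    intro k
    by_cases h1 : k = A
    · subst h1
      simp [if_neg hAB, A]
    · by_cases h2 : k = B
      · subst h2
        have : (B : ℕ) ≠ j - 2 * d := by simp [B]
        simp [this, if_neg h1, B]
      · have e1 : (k : ℕ) ≠ j - 2 * d := fun h => h1 (Fin.ext h)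
        have e2 : (k : ℕ) ≠ j - 2 * d + 1 := fun h => h2 (Fin.ext h)
        simp [e1, e2, if_neg h1, if_neg h2]
  rw [Finset.sum_congr rfl fun k _ => hterm k, Finset.sum_add_distrib]
  simp [Finset.sum_ite_eq', sub_eq_add_neg]



lemma coordP (p : ℕ → Fin d → ℝ) (hp : ∀ i < d, p i = 0 ∨ p i = stdBasisVec d i)
    {k : ℕ} (hk : k < d) :
    ∑ i ∈ Finset.range d, p i ⟨k, hk⟩ = if p k = stdBasisVec d k then 1 else 0 := by
  rw [Finset.sum_eq_single_of_mem k (Finset.mem_range.2 hk)]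
  · rcases hp k hk with h | h
    · rw [if_neg (by rw [h]; exact (e_ne_zero hk).symm), h]; rfl
    · rw [if_pos h, h]; simp [stdBasisVec]
  · intro i hi hik
    rcases hp i (Finset.mem_range.1 hi) with h | h
    · rw [h]; rfl
    · rw [h]; simp [stdBasisVec, Ne.symm hik]

lemma sum_eq_pair {n a b : ℕ} (f : ℕ → ℝ) (hab : a ≠ b) (ha : a < n) (hb : b < n)
    (h : ∀ j < n, j ≠ a → j ≠ b → f j = 0) :
    ∑ j ∈ Finset.range n, f j = f a + f b := by
  have key : ∀ j ∈ Finset.range n,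
      f j = (if j = a then f a else 0) + (if j = b then f b else 0) := by
    intro j hj
    rw [Finset.mem_range] at hj
    by_cases h1 : j = a
    · subst h1; simp [if_neg hab]
    · by_cases h2 : j = b
      · subst h2; simp [if_neg h1]
      · simp [h1, h2, h j hj h1 h2]
  rw [Finset.sum_congr rfl key, Finset.sum_add_distrib]
  simp [Finset.sum_ite_eq', Finset.mem_range, ha, hb]

lemma coordQ (q : ℕ → Fin d → ℝ)
    (hq : ∀ j < d - 1, q j = 0 ∨ q j = stdBasisVec d j ∨
      q j = stdBasisVec d j + stdBasisVec d (j + 1))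
    {k : ℕ} (hk : k < d) :
    ∑ j ∈ Finset.range (d - 1), q j ⟨k, hk⟩
      = (if k < d - 1 ∧ q k ≠ 0 then 1 else 0)
        + (if 1 ≤ k ∧ q (k - 1) = stdBasisVec d (k - 1) + stdBasisVec d k then 1 else 0) := by
  have hside : ∀ j < d - 1, j ≠ k → j + 1 ≠ k → q j ⟨k, hk⟩ = 0 := by
    intro j hj h1 h2
    rcases hq j hj with h | h | h
    · rw [h]; rfl
    · rw [h]; simp [stdBasisVec, Ne.symm h1]
    · rw [h]; simp [stdBasisVec, Ne.symm h1, Ne.symm h2]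
  have hv1 : k < d - 1 → q k ⟨k, hk⟩ = if q k ≠ 0 then 1 else 0 := by
    intro h2
    rcases hq k h2 with h | h | h
    · rw [h]; simp
    · rw [if_pos (by rw [h]; exact e_ne_zero hk), h]; simp [stdBasisVec]
    · rw [if_pos (by rw [h]; exact eB_ne_zero (by omega)), h]
      simp [stdBasisVec]
  have hv2 : 1 ≤ k →
      q (k - 1) ⟨k, hk⟩ = if q (k - 1) = stdBasisVec d (k - 1) + stdBasisVec d k then 1 else 0 := by
    intro h1
    obtain ⟨m, rfl⟩ : ∃ m, k = m + 1 := ⟨k - 1, by omega⟩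
    simp only [Nat.add_sub_cancel]
    rcases hq m (by omega) with h | h | h
    · rw [if_neg (by rw [h]; exact (eB_ne_zero (by omega)).symm), h]; rfl
    · rw [if_neg (by rw [h]; exact e_ne_eB (by omega)), h]; simp [stdBasisVec]
    · rw [if_pos h, h]; simp [stdBasisVec]
  by_cases h1 : 1 ≤ k
  · by_cases h2 : k < d - 1
    · rw [sum_eq_pair (a := k - 1) (b := k) _ (by omega) (by omega) h2
        (fun j hj ha hb => hside j hj hb (by omega))]
      rw [hv1 h2, hv2 h1]
      simp only [h1, h2, true_and]
      ring
    · rw [Finset.sum_eq_single_of_mem (k - 1) (Finset.mem_range.2 (by omega))]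
      · rw [hv2 h1]
        simp only [h1, h2, true_and, false_and, if_false]
        ring
      · intro j hj hjk
        have hj' := Finset.mem_range.1 hj
        exact hside j hj' (by omega) (by omega)
  · by_cases h2 : k < d - 1
    · rw [Finset.sum_eq_single_of_mem k (Finset.mem_range.2 h2)]
      · rw [hv1 h2]
        simp only [h1, h2, true_and, false_and, if_false]
        ring
      · intro j hj hjk
        have hj' := Finset.mem_range.1 hj
        exact hside j hj' hjk (by omega)
    · rw [show d - 1 = 0 by omega]
      simp [h1, h2]

lemma coord (p q : ℕ → Fin d → ℝ)
    (hp : ∀ i < d, p i = 0 ∨ p i = stdBasisVec d i)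
    (hq : ∀ j < d - 1, q j = 0 ∨ q j = stdBasisVec d j ∨
      q j = stdBasisVec d j + stdBasisVec d (j + 1))
    {k : ℕ} (hk : k < d) :
    ((∑ i ∈ Finset.range d, p i) + ∑ j ∈ Finset.range (d - 1), q j) ⟨k, hk⟩
      = (if p k = stdBasisVec d k then 1 else 0)
        + (if k < d - 1 ∧ q k ≠ 0 then 1 else 0)
        + (if 1 ≤ k ∧ q (k - 1) = stdBasisVec d (k - 1) + stdBasisVec d k then 1 else 0) := by
  rw [Pi.add_apply, Finset.sum_apply, Finset.sum_apply, coordP p hp hk, coordQ q hq hk]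
  ring


/-! ### Lower bounds and face characterizations -/

lemma e_coord_nonneg (i : ℕ) (k : Fin d) : 0 ≤ stdBasisVec d i k := by
  dsimp [stdBasisVec]; split <;> norm_num

lemma pell_lb (v : Fin d → ℝ) (m1 m2 : ℕ → ℝ)
    (h1 : ∀ i < d, m1 i ≤ 0 ∧ m1 i ≤ phi v (stdBasisVec d i))
    (h2 : ∀ j < d - 1, m2 j ≤ 0 ∧ m2 j ≤ phi v (stdBasisVec d j) ∧
      m2 j ≤ phi v (stdBasisVec d j + stdBasisVec d (j + 1)))
    {y : Fin d → ℝ} (hy : y ∈ pellytope d) :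
    (∑ i ∈ Finset.range d, m1 i) + ∑ j ∈ Finset.range (d - 1), m2 j ≤ phi v y := by
  obtain ⟨p, q, hp, hq, hsum⟩ := exists_decomp hy
  rw [← hsum, phi_add, phi_sum, phi_sum]
  refine add_le_add (Finset.sum_le_sum fun i hi => ?_) (Finset.sum_le_sum fun j hj => ?_)
  · have hi' := Finset.mem_range.1 hi
    refine phi_conv_ge ?_ (hp i hi')
    intro w hw
    simp only [Set.mem_insert_iff, Set.mem_singleton_iff] at hw
    rcases hw with rfl | rfl
    · rw [phi_zero]; exact (h1 i hi').1
    · exact (h1 i hi').2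
  · have hj' := Finset.mem_range.1 hj
    refine phi_conv_ge ?_ (hq j hj')
    intro w hw
    simp only [Set.mem_insert_iff, Set.mem_singleton_iff] at hw
    rcases hw with rfl | rfl | rfl
    · rw [phi_zero]; exact (h2 j hj').1
    · exact (h2 j hj').2.1
    · exact (h2 j hj').2.2

lemma zero_mem : (0 : Fin d → ℝ) ∈ pellytope d := by
  have h := memP (d := d) (fun _ => 0) (fun _ => 0)
    (fun i _ => subset_convexHull ℝ _ (by simp))
    (fun j _ => subset_convexHull ℝ _ (by simp))
  simpa using h

lemma sum_ind {n k : ℕ} (c : ℝ) :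
    ∑ i ∈ Finset.range n, (if i = k then c else 0) = if k < n then c else 0 := by
  rw [Finset.sum_ite_eq' (Finset.range n) k fun _ => c]
  simp [Finset.mem_range]

lemma sum_ind_pair {n k : ℕ} (c : ℝ) :
    ∑ j ∈ Finset.range n, (if j = k ∨ j + 1 = k then c else 0)
      = (if k < n then c else 0) + (if 1 ≤ k ∧ k - 1 < n then c else 0) := by
  by_cases h1 : 1 ≤ k
  · by_cases h2 : k < n
    · rw [sum_eq_pair (a := k - 1) (b := k) _ (by omega) (by omega) h2 ?_]
      · rw [if_pos (by omega : k - 1 = k ∨ k - 1 + 1 = k), if_pos (Or.inl rfl), if_pos h2,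
          if_pos (by omega : 1 ≤ k ∧ k - 1 < n)]
        try ring
      · intro j hj hja hjb
        rw [if_neg (by omega)]
    · by_cases h3 : k - 1 < n
      · rw [Finset.sum_eq_single_of_mem (k - 1) (Finset.mem_range.2 h3)]
        · rw [if_pos (by omega : k - 1 = k ∨ k - 1 + 1 = k), if_neg h2,
            if_pos (by omega : 1 ≤ k ∧ k - 1 < n)]
          ring
        · intro j hj hjk
          have hj' := Finset.mem_range.1 hj
          rw [if_neg (by omega)]
      · rw [Finset.sum_eq_zero, if_neg h2, if_neg (by omega : ¬(1 ≤ k ∧ k - 1 < n))]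
        · ring
        · intro j hj
          have hj' := Finset.mem_range.1 hj
          rw [if_neg (by omega)]
  · by_cases h2 : k < n
    · rw [Finset.sum_eq_single_of_mem k (Finset.mem_range.2 h2)]
      · rw [if_pos (Or.inl rfl), if_pos h2, if_neg (by omega : ¬(1 ≤ k ∧ k - 1 < n))]
        ring
      · intro j hj hjk
        rw [if_neg (by omega)]
    · rw [Finset.sum_eq_zero, if_neg h2, if_neg (by omega : ¬(1 ≤ k ∧ k - 1 < n))]
      · ring
      · intro j hj
        have hj' := Finset.mem_range.1 hj
        rw [if_neg (by omega)]

lemma phi_ray2' {k : ℕ} (hk : k < d) (y : Fin d → ℝ) :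
    phi (rayGen d (d + k)) y = -y ⟨k, hk⟩ := by
  rw [phi_ray2 (by omega) (by omega)]
  have : (⟨d + k - d, by omega⟩ : Fin d) = ⟨k, hk⟩ := Fin.ext (by simp)
  rw [this]

lemma phi_ray3' {k : ℕ} (hk : k + 1 < d) (y : Fin d → ℝ) :
    phi (rayGen d (2 * d + k)) y = y ⟨k, by omega⟩ - y ⟨k + 1, hk⟩ := by
  rw [phi_ray3 (j := 2 * d + k) (by omega) (by omega)]
  have h1 : (⟨2 * d + k - 2 * d, by omega⟩ : Fin d) = ⟨k, by omega⟩ := Fin.ext (by simp)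
  have h2 : (⟨2 * d + k - 2 * d + 1, by omega⟩ : Fin d) = ⟨k + 1, hk⟩ := Fin.ext (by simp)
  rw [h1, h2]

lemma face1 {k : ℕ} (hk : k < d) {x : Fin d → ℝ} (hxP : x ∈ pellytope d) :
    x ∈ pellFace d k ↔ x ⟨k, hk⟩ = 0 := by
  have hnn : ∀ y ∈ pellytope d, 0 ≤ phi (rayGen d k) y := by
    intro y hy
    have h := pell_lb (rayGen d k) (fun _ => 0) (fun _ => 0)
      (fun i hi => ⟨le_refl 0, by rw [phi_ray1 hk]; exact e_coord_nonneg i _⟩)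
      (fun j hj => ⟨le_refl 0, by rw [phi_ray1 hk]; exact e_coord_nonneg j _,
        by rw [phi_ray1 hk]
           exact add_nonneg (e_coord_nonneg _ _) (e_coord_nonneg _ _)⟩) hy
    simpa using h
  constructor
  · intro hF
    have h0 : phi (rayGen d k) x ≤ 0 := by
      have hh : phi (rayGen d k) x ≤ phi (rayGen d k) 0 := hF.2 0 zero_mem
      rwa [phi_zero] at hh
    have heq := le_antisymm h0 (hnn x hxP)
    rwa [phi_ray1 hk] at heq
  · intro h
    refine ⟨hxP, fun y hy => ?_⟩
    show phi (rayGen d k) x ≤ phi (rayGen d k) y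
    rw [phi_ray1 hk, h]
    exact hnn y hy

lemma face2 {k : ℕ} (hk : k < d) {x : Fin d → ℝ} (hxP : x ∈ pellytope d) :
    x ∈ pellFace d (d + k) ↔
      x ⟨k, hk⟩ = 1 + (if k < d - 1 then (1:ℝ) else 0) + (if 1 ≤ k then (1:ℝ) else 0) := by
  set M : ℝ := 1 + (if k < d - 1 then (1:ℝ) else 0) + (if 1 ≤ k then (1:ℝ) else 0) with hM
  have hub : ∀ y ∈ pellytope d, -M ≤ phi (rayGen d (d + k)) y := by
    intro y hy
    have h := pell_lb (rayGen d (d + k))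
      (fun i => if i = k then (-1:ℝ) else 0)
      (fun j => if j = k ∨ j + 1 = k then (-1:ℝ) else 0)
      (fun i hi => ⟨by split <;> norm_num, by
        rw [phi_ray2' hk]
        simp only [stdBasisVec]
        split_ifs <;> (first | (exfalso; omega) | norm_num)⟩)
      (fun j hj => ⟨by split <;> norm_num, by
        rw [phi_ray2' hk]
        simp only [stdBasisVec]
        split_ifs <;> (first | (exfalso; omega) | norm_num), by
        rw [phi_ray2' hk]
        simp only [Pi.add_apply, stdBasisVec]
        split_ifs <;> (first | (exfalso; omega) | norm_num)⟩) hy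
    rw [sum_ind, sum_ind_pair, if_pos hk] at h
    have e3 : (if 1 ≤ k ∧ k - 1 < d - 1 then (-1:ℝ) else 0) = if 1 ≤ k then (-1:ℝ) else 0 := by
      by_cases h5 : 1 ≤ k
      · rw [if_pos ⟨h5, by omega⟩, if_pos h5]
      · rw [if_neg (fun hc => h5 hc.1), if_neg h5]
    rw [e3] at h
    refine le_trans (le_of_eq ?_) h
    rw [hM]
    by_cases h4 : k < d - 1 <;> by_cases h5 : 1 ≤ k <;> simp [h4, h5] <;> norm_num
  obtain ⟨w, hwP, hwv⟩ : ∃ w ∈ pellytope d, phi (rayGen d (d + k)) w = -M := by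
    set pw : ℕ → Fin d → ℝ := fun i => if i = k then stdBasisVec d k else 0 with hpw
    set qw : ℕ → Fin d → ℝ := fun j => if j = k then stdBasisVec d k
      else if j + 1 = k then stdBasisVec d (k - 1) + stdBasisVec d k else 0 with hqw
    have hpv : ∀ i < d, pw i = 0 ∨ pw i = stdBasisVec d i := by
      intro i hi
      by_cases h : i = k
      · subst h; right; simp [pw]
      · left; simp [pw, h]
    have hqv : ∀ j < d - 1, qw j = 0 ∨ qw j = stdBasisVec d j ∨
        qw j = stdBasisVec d j + stdBasisVec d (j + 1) := by
      intro j hj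
      by_cases h : j = k
      · subst h; right; left; simp [qw]
      · by_cases h2 : j + 1 = k
        · right; right
          have e1 : k - 1 = j := by omega
          simp only [qw]
          rw [if_neg h, if_pos h2, e1, show k = j + 1 from h2.symm]
        · left; simp [qw, h, h2]
    refine ⟨_, memP pw qw (fun i hi => ?_) (fun j hj => ?_), ?_⟩
    · rcases hpv i hi with h | h <;> rw [h] <;> exact subset_convexHull ℝ _ (by simp)
    · rcases hqv j hj with h | h | h <;> rw [h] <;> exact subset_convexHull ℝ _ (by simp)
    · rw [phi_ray2' hk, coord pw qw hpv hqv hk]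
      have h1 : pw k = stdBasisVec d k := by simp [pw]
      have h2 : (if k < d - 1 ∧ qw k ≠ 0 then (1:ℝ) else 0)
          = (if k < d - 1 then (1:ℝ) else 0) := by
        have hqk : qw k = stdBasisVec d k := by simp [qw]
        by_cases h : k < d - 1 <;> simp [h, hqk, e_ne_zero hk]
      have h3 : (if 1 ≤ k ∧ qw (k - 1) = stdBasisVec d (k - 1) + stdBasisVec d k
            then (1:ℝ) else 0) = (if 1 ≤ k then (1:ℝ) else 0) := by
        by_cases h : 1 ≤ k
        · have hne : ¬(k - 1 = k) := by omega
          have heq : k - 1 + 1 = k := by omega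
          simp [h, qw, hne, heq]
        · simp [h]
      rw [h1, if_pos rfl, h2, h3, hM]
  constructor
  · intro hF
    have hle : phi (rayGen d (d + k)) x ≤ -M := by
      rw [← hwv]; exact hF.2 w hwP
    have heq := le_antisymm hle (hub x hxP)
    rw [phi_ray2' hk] at heq
    linarith [heq]
  · intro h
    refine ⟨hxP, fun y hy => ?_⟩
    show phi (rayGen d (d + k)) x ≤ phi (rayGen d (d + k)) y
    rw [phi_ray2' hk, h]
    have := hub y hy
    linarith

lemma face3 {k : ℕ} (hk : k + 1 < d) {x : Fin d → ℝ} (hxP : x ∈ pellytope d) :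
    x ∈ pellFace d (2 * d + k) ↔
      x ⟨k, by omega⟩ - x ⟨k + 1, hk⟩ = -1 - (if k + 1 < d - 1 then (1:ℝ) else 0) := by
  set M : ℝ := -1 - (if k + 1 < d - 1 then (1:ℝ) else 0) with hM
  have hub : ∀ y ∈ pellytope d, M ≤ phi (rayGen d (2 * d + k)) y := by
    intro y hy
    have h := pell_lb (rayGen d (2 * d + k))
      (fun i => if i = k + 1 then (-1:ℝ) else 0)
      (fun j => if j = k + 1 then (-1:ℝ) else 0)
      (fun i hi => ⟨by split <;> norm_num, by
        rw [phi_ray3' hk]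
        simp only [stdBasisVec]
        split_ifs <;> (first | (exfalso; omega) | norm_num)⟩)
      (fun j hj => ⟨by split <;> norm_num, by
        rw [phi_ray3' hk]
        simp only [stdBasisVec]
        split_ifs <;> (first | (exfalso; omega) | norm_num), by
        rw [phi_ray3' hk]
        simp only [Pi.add_apply, stdBasisVec]
        split_ifs <;> (first | (exfalso; omega) | norm_num)⟩) hy
    rw [sum_ind, sum_ind, if_pos (by omega : k + 1 < d)] at h
    refine le_trans (le_of_eq ?_) h
    rw [hM]
    by_cases h4 : k + 1 < d - 1 <;> simp [h4] <;> ring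
  obtain ⟨w, hwP, hwv⟩ : ∃ w ∈ pellytope d, phi (rayGen d (2 * d + k)) w = M := by
    set pw : ℕ → Fin d → ℝ := fun i => if i = k + 1 then stdBasisVec d (k + 1) else 0 with hpw
    set qw : ℕ → Fin d → ℝ := fun j => if j = k + 1 then stdBasisVec d (k + 1) else 0 with hqw
    have hpv : ∀ i < d, pw i = 0 ∨ pw i = stdBasisVec d i := by
      intro i hi
      by_cases h : i = k + 1
      · subst h; right; simp [pw]
      · left; simp [pw, h]
    have hqv : ∀ j < d - 1, qw j = 0 ∨ qw j = stdBasisVec d j ∨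
        qw j = stdBasisVec d j + stdBasisVec d (j + 1) := by
      intro j hj
      by_cases h : j = k + 1
      · subst h; right; left; simp [qw]
      · left; simp [qw, h]
    refine ⟨_, memP pw qw (fun i hi => ?_) (fun j hj => ?_), ?_⟩
    · rcases hpv i hi with h | h <;> rw [h] <;> exact subset_convexHull ℝ _ (by simp)
    · rcases hqv j hj with h | h | h <;> rw [h] <;> exact subset_convexHull ℝ _ (by simp)
    · rw [phi_ray3' hk, coord pw qw hpv hqv (by omega : k < d),
        coord pw qw hpv hqv hk]
      have h1 : ¬(pw k = stdBasisVec d k) := by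
        have : pw k = 0 := by simp [pw]
        rw [this]
        exact (e_ne_zero (by omega)).symm
      have h2 : ¬(k < d - 1 ∧ qw k ≠ 0) := by
        rintro ⟨-, hne⟩
        exact hne (by simp [qw])
      have h3 : ¬(1 ≤ k ∧ qw (k - 1) = stdBasisVec d (k - 1) + stdBasisVec d k) := by
        rintro ⟨h1k, heq⟩
        have : qw (k - 1) = 0 := by
          simp only [qw]
          rw [if_neg (by omega)]
        rw [this] at heq
        exact (eB_ne_zero (d := d) (j := k - 1) (by omega)) (by
          rw [show k - 1 + 1 = k by omega]; exact heq.symm)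
      have h4 : pw (k + 1) = stdBasisVec d (k + 1) := by simp [pw]
      have h5 : (if k + 1 < d - 1 ∧ qw (k + 1) ≠ 0 then (1:ℝ) else 0)
          = (if k + 1 < d - 1 then (1:ℝ) else 0) := by
        have hq1 : qw (k + 1) = stdBasisVec d (k + 1) := by simp [qw]
        by_cases h : k + 1 < d - 1 <;> simp [h, hq1, e_ne_zero (show k + 1 < d from hk)]
      have h6 : ¬(1 ≤ k + 1 ∧ qw (k + 1 - 1) = stdBasisVec d (k + 1 - 1) + stdBasisVec d (k + 1)) := by
        rintro ⟨-, heq⟩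
        have hq0 : qw (k + 1 - 1) = 0 := by
          simp only [Nat.add_sub_cancel, qw]
          rw [if_neg (by omega)]
        rw [hq0, Nat.add_sub_cancel] at heq
        exact (eB_ne_zero (j := k) hk) heq.symm
      rw [if_neg h1, if_neg h2, if_neg h3, h4, if_pos rfl, h5, if_neg h6, hM]
      ring
  constructor
  · intro hF
    have hle : phi (rayGen d (2 * d + k)) x ≤ M := by
      rw [← hwv]; exact hF.2 w hwP
    have heq := le_antisymm hle (hub x hxP)
    rw [phi_ray3' hk] at heq
    rw [hM] at heq ⊢
    linarith [heq]
  · intro h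
    refine ⟨hxP, fun y hy => ?_⟩
    show phi (rayGen d (2 * d + k)) x ≤ phi (rayGen d (2 * d + k)) y
    rw [phi_ray3' hk, h]
    have := hub y hy
    rw [hM] at this ⊢
    linarith


/-! ### Perturbation lemmas: constraints on extreme-point decompositions -/

lemma update_sum (f : ℕ → Fin d → ℝ) {n i : ℕ} (hi : i < n) (z : Fin d → ℝ) :
    ∑ j ∈ Finset.range n, Function.update f i z j
      = (∑ j ∈ Finset.range n, f j) - f i + z := by
  rw [Finset.sum_update_of_mem (Finset.mem_range.2 hi), ← Finset.erase_eq,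
    Finset.sum_erase_eq_sub (Finset.mem_range.2 hi)]
  abel

lemma mid_mem {S : Set (Fin d → ℝ)} {a b : Fin d → ℝ} (ha : a ∈ S) (hb : b ∈ S) :
    (1/2 : ℝ) • a + (1/2 : ℝ) • b ∈ convexHull ℝ S :=
  (convex_convexHull ℝ S) (subset_convexHull ℝ S ha) (subset_convexHull ℝ S hb)
    (by norm_num) (by norm_num) (by norm_num)

lemma not_extreme {x v : Fin d → ℝ} (hv : v ≠ 0) (h1 : x + v ∈ pellytope d)
    (h2 : x - v ∈ pellytope d) (hx : x ∈ Set.extremePoints ℝ (pellytope d)) : False := by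
  have hseg : x ∈ openSegment ℝ (x - v) (x + v) :=
    ⟨1/2, 1/2, by norm_num, by norm_num, by norm_num, by module⟩
  have h := hx.2 h2 h1 hseg
  apply hv
  have h3 := congrArg (fun z => z - x) h
  simpa using h3

section Perturb

variable {x : Fin d → ℝ} {p q : ℕ → Fin d → ℝ}

lemma mem_update_p
    (hp : ∀ i < d, p i ∈ convexHull ℝ {0, stdBasisVec d i})
    (hq : ∀ j < d - 1, q j ∈
      convexHull ℝ {0, stdBasisVec d j, stdBasisVec d j + stdBasisVec d (j + 1)})
    (hsum : (∑ i ∈ Finset.range d, p i) + (∑ j ∈ Finset.range (d - 1), q j) = x)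
    {i0 : ℕ} (hi0 : i0 < d) {z : Fin d → ℝ}
    (hz : z ∈ convexHull ℝ {0, stdBasisVec d i0}) :
    x - p i0 + z ∈ pellytope d := by
  have h := memP (d := d) (Function.update p i0 z) q
    (fun i hi => by
      by_cases h' : i = i0
      · subst h'; rwa [Function.update_self]
      · rw [Function.update_of_ne h']; exact hp i hi) hq
  rw [update_sum p hi0 z] at h
  have he : (∑ i ∈ Finset.range d, p i) - p i0 + z + ∑ j ∈ Finset.range (d - 1), q j
      = x - p i0 + z := by rw [← hsum]; abel
  rwa [he] at h

lemma mem_update_q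
    (hp : ∀ i < d, p i ∈ convexHull ℝ {0, stdBasisVec d i})
    (hq : ∀ j < d - 1, q j ∈
      convexHull ℝ {0, stdBasisVec d j, stdBasisVec d j + stdBasisVec d (j + 1)})
    (hsum : (∑ i ∈ Finset.range d, p i) + (∑ j ∈ Finset.range (d - 1), q j) = x)
    {j0 : ℕ} (hj0 : j0 < d - 1) {z : Fin d → ℝ}
    (hz : z ∈ convexHull ℝ {0, stdBasisVec d j0, stdBasisVec d j0 + stdBasisVec d (j0 + 1)}) :
    x - q j0 + z ∈ pellytope d := by
  have h := memP (d := d) p (Function.update q j0 z) hp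
    (fun j hj => by
      by_cases h' : j = j0
      · subst h'; rwa [Function.update_self]
      · rw [Function.update_of_ne h']; exact hq j hj)
  rw [update_sum q hj0 z] at h
  have he : (∑ i ∈ Finset.range d, p i) + ((∑ j ∈ Finset.range (d - 1), q j) - q j0 + z)
      = x - q j0 + z := by rw [← hsum]; abel
  rwa [he] at h

variable (hpv : ∀ i < d, p i = 0 ∨ p i = stdBasisVec d i)
    (hqv : ∀ j < d - 1, q j = 0 ∨ q j = stdBasisVec d j ∨
      q j = stdBasisVec d j + stdBasisVec d (j + 1))
    (hsum : (∑ i ∈ Finset.range d, p i) + (∑ j ∈ Finset.range (d - 1), q j) = x)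
    (hx : x ∈ Set.extremePoints ℝ (pellytope d))
include hpv hqv hsum hx

lemma hullp : ∀ i < d, p i ∈ convexHull ℝ {0, stdBasisVec d i} := fun i hi => by
  rcases hpv i hi with h | h <;> rw [h] <;> exact subset_convexHull ℝ _ (by simp)

lemma hullq : ∀ j < d - 1, q j ∈
    convexHull ℝ {0, stdBasisVec d j, stdBasisVec d j + stdBasisVec d (j + 1)} := fun j hj => by
  rcases hqv j hj with h | h | h <;> rw [h] <;> exact subset_convexHull ℝ _ (by simp)

lemma constraint1 : ∀ j, j < d - 1 → p j = stdBasisVec d j → q j ≠ 0 := by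
  intro j hj hpj hqj
  have hjd : j < d := by omega
  have hpc := hullp hpv hqv hsum hx
  have hqc := hullq hpv hqv hsum hx
  have hmem1 : x + (1/2 : ℝ) • stdBasisVec d j ∈ pellytope d := by
    have hz : (1/2 : ℝ) • (0 : Fin d → ℝ) + (1/2 : ℝ) • stdBasisVec d j ∈
        convexHull ℝ {0, stdBasisVec d j, stdBasisVec d j + stdBasisVec d (j + 1)} :=
      mid_mem (by simp) (by simp)
    have h := mem_update_q hpc hqc hsum hj hz
    have he : x - q j + ((1/2 : ℝ) • (0 : Fin d → ℝ) + (1/2 : ℝ) • stdBasisVec d j)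
        = x + (1/2 : ℝ) • stdBasisVec d j := by rw [hqj]; module
    rwa [he] at h
  have hmem2 : x - (1/2 : ℝ) • stdBasisVec d j ∈ pellytope d := by
    have hz : (1/2 : ℝ) • (0 : Fin d → ℝ) + (1/2 : ℝ) • stdBasisVec d j ∈
        convexHull ℝ {0, stdBasisVec d j} := mid_mem (by simp) (by simp)
    have h := mem_update_p hpc hqc hsum hjd hz
    have he : x - p j + ((1/2 : ℝ) • (0 : Fin d → ℝ) + (1/2 : ℝ) • stdBasisVec d j)
        = x - (1/2 : ℝ) • stdBasisVec d j := by rw [hpj]; module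
    rwa [he] at h
  exact not_extreme (smul_ne_zero (by norm_num) (e_ne_zero hjd)) hmem1 hmem2 hx

lemma constraint2 : ∀ j, j < d - 1 → q j = stdBasisVec d j → p j ≠ 0 := by
  intro j hj hqj hpj
  have hjd : j < d := by omega
  have hpc := hullp hpv hqv hsum hx
  have hqc := hullq hpv hqv hsum hx
  have hmem1 : x + (1/2 : ℝ) • stdBasisVec d j ∈ pellytope d := by
    have hz : (1/2 : ℝ) • (0 : Fin d → ℝ) + (1/2 : ℝ) • stdBasisVec d j ∈
        convexHull ℝ {0, stdBasisVec d j} := mid_mem (by simp) (by simp)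
    have h := mem_update_p hpc hqc hsum hjd hz
    have he : x - p j + ((1/2 : ℝ) • (0 : Fin d → ℝ) + (1/2 : ℝ) • stdBasisVec d j)
        = x + (1/2 : ℝ) • stdBasisVec d j := by rw [hpj]; module
    rwa [he] at h
  have hmem2 : x - (1/2 : ℝ) • stdBasisVec d j ∈ pellytope d := by
    have hz : (1/2 : ℝ) • (0 : Fin d → ℝ) + (1/2 : ℝ) • stdBasisVec d j ∈
        convexHull ℝ {0, stdBasisVec d j, stdBasisVec d j + stdBasisVec d (j + 1)} :=
      mid_mem (by simp) (by simp)
    have h := mem_update_q hpc hqc hsum hj hz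
    have he : x - q j + ((1/2 : ℝ) • (0 : Fin d → ℝ) + (1/2 : ℝ) • stdBasisVec d j)
        = x - (1/2 : ℝ) • stdBasisVec d j := by rw [hqj]; module
    rwa [he] at h
  exact not_extreme (smul_ne_zero (by norm_num) (e_ne_zero hjd)) hmem1 hmem2 hx

lemma constraint3 : ∀ j, j < d - 1 →
    q j = stdBasisVec d j + stdBasisVec d (j + 1) → p (j + 1) ≠ 0 := by
  intro j hj hqj hpj
  have hjd : j + 1 < d := by omega
  have hpc := hullp hpv hqv hsum hx
  have hqc := hullq hpv hqv hsum hx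
  have hmem1 : x + (1/2 : ℝ) • stdBasisVec d (j + 1) ∈ pellytope d := by
    have hz : (1/2 : ℝ) • (0 : Fin d → ℝ) + (1/2 : ℝ) • stdBasisVec d (j + 1) ∈
        convexHull ℝ {0, stdBasisVec d (j + 1)} := mid_mem (by simp) (by simp)
    have h := mem_update_p hpc hqc hsum hjd hz
    have he : x - p (j + 1) + ((1/2 : ℝ) • (0 : Fin d → ℝ) + (1/2 : ℝ) • stdBasisVec d (j + 1))
        = x + (1/2 : ℝ) • stdBasisVec d (j + 1) := by rw [hpj]; module
    rwa [he] at h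
  have hmem2 : x - (1/2 : ℝ) • stdBasisVec d (j + 1) ∈ pellytope d := by
    have hz : (1/2 : ℝ) • stdBasisVec d j
          + (1/2 : ℝ) • (stdBasisVec d j + stdBasisVec d (j + 1)) ∈
        convexHull ℝ {0, stdBasisVec d j, stdBasisVec d j + stdBasisVec d (j + 1)} :=
      mid_mem (by simp) (by simp)
    have h := mem_update_q hpc hqc hsum hj hz
    have he : x - q j + ((1/2 : ℝ) • stdBasisVec d j
          + (1/2 : ℝ) • (stdBasisVec d j + stdBasisVec d (j + 1)))
        = x - (1/2 : ℝ) • stdBasisVec d (j + 1) := by rw [hqj]; module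
    rwa [he] at h
  exact not_extreme (smul_ne_zero (by norm_num) (e_ne_zero hjd)) hmem1 hmem2 hx

lemma constraint4 : ∀ j, j < d - 1 →
    q j = stdBasisVec d j → p (j + 1) ≠ stdBasisVec d (j + 1) := by
  intro j hj hqj hpj
  have hjd : j + 1 < d := by omega
  have hpc := hullp hpv hqv hsum hx
  have hqc := hullq hpv hqv hsum hx
  have hmem1 : x + (1/2 : ℝ) • stdBasisVec d (j + 1) ∈ pellytope d := by
    have hz : (1/2 : ℝ) • stdBasisVec d j
          + (1/2 : ℝ) • (stdBasisVec d j + stdBasisVec d (j + 1)) ∈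
        convexHull ℝ {0, stdBasisVec d j, stdBasisVec d j + stdBasisVec d (j + 1)} :=
      mid_mem (by simp) (by simp)
    have h := mem_update_q hpc hqc hsum hj hz
    have he : x - q j + ((1/2 : ℝ) • stdBasisVec d j
          + (1/2 : ℝ) • (stdBasisVec d j + stdBasisVec d (j + 1)))
        = x + (1/2 : ℝ) • stdBasisVec d (j + 1) := by rw [hqj]; module
    rwa [he] at h
  have hmem2 : x - (1/2 : ℝ) • stdBasisVec d (j + 1) ∈ pellytope d := by
    have hz : (1/2 : ℝ) • (0 : Fin d → ℝ) + (1/2 : ℝ) • stdBasisVec d (j + 1) ∈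
        convexHull ℝ {0, stdBasisVec d (j + 1)} := mid_mem (by simp) (by simp)
    have h := mem_update_p hpc hqc hsum hjd hz
    have he : x - p (j + 1) + ((1/2 : ℝ) • (0 : Fin d → ℝ) + (1/2 : ℝ) • stdBasisVec d (j + 1))
        = x - (1/2 : ℝ) • stdBasisVec d (j + 1) := by rw [hpj]; module
    rwa [he] at h
  exact not_extreme (smul_ne_zero (by norm_num) (e_ne_zero hjd)) hmem1 hmem2 hx

end Perturb


/-! ### ite helpers and the combinatorial counting lemma -/

lemma ite_nonneg {a : Prop} [Decidable a] : (0:ℝ) ≤ if a then (1:ℝ) else 0 := by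
  split <;> norm_num

lemma ite_le_one {a : Prop} [Decidable a] : (if a then (1:ℝ) else 0) ≤ 1 := by
  split <;> norm_num

lemma ite_le_ite {a b : Prop} [Decidable a] [Decidable b] (h : a → b) :
    (if a then (1:ℝ) else 0) ≤ if b then (1:ℝ) else 0 := by
  by_cases ha : a
  · rw [if_pos ha, if_pos (h ha)]
  · rw [if_neg ha]; exact ite_nonneg

lemma ite_eq_zero {a : Prop} [Decidable a] (h : (if a then (1:ℝ) else 0) = 0) : ¬a := by
  intro ha; rw [if_pos ha] at h; norm_num at h

lemma sum3_eq_zero {a b c : Prop} [Decidable a] [Decidable b] [Decidable c]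
    (h : (if a then (1:ℝ) else 0) + (if b then (1:ℝ) else 0) + (if c then (1:ℝ) else 0) = 0) :
    ¬a ∧ ¬b ∧ ¬c := by
  have n1 : (0:ℝ) ≤ if a then (1:ℝ) else 0 := ite_nonneg
  have n2 : (0:ℝ) ≤ if b then (1:ℝ) else 0 := ite_nonneg
  have n3 : (0:ℝ) ≤ if c then (1:ℝ) else 0 := ite_nonneg
  exact ⟨ite_eq_zero (by linarith), ite_eq_zero (by linarith), ite_eq_zero (by linarith)⟩

lemma sum3_eq_max {a b c p2 p3 : Prop} [Decidable a] [Decidable b] [Decidable c]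
    [Decidable p2] [Decidable p3] (hb : b → p2) (hc : c → p3) :
    ((if a then (1:ℝ) else 0) + (if b then (1:ℝ) else 0) + (if c then (1:ℝ) else 0)
      = 1 + (if p2 then (1:ℝ) else 0) + (if p3 then (1:ℝ) else 0))
    ↔ (a ∧ (p2 → b) ∧ (p3 → c)) := by
  constructor
  · intro h
    have l1 : (if b then (1:ℝ) else 0) ≤ if p2 then (1:ℝ) else 0 := ite_le_ite hb
    have l2 : (if c then (1:ℝ) else 0) ≤ if p3 then (1:ℝ) else 0 := ite_le_ite hc
    have l3 : (if a then (1:ℝ) else 0) ≤ 1 := ite_le_one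
    refine ⟨?_, ?_, ?_⟩
    · by_contra ha
      rw [if_neg ha] at h
      linarith
    · intro hp2
      by_contra hbb
      rw [if_neg hbb, if_pos hp2] at h
      have := ite_nonneg (a := p3)
      linarith
    · intro hp3
      by_contra hcc
      rw [if_neg hcc, if_pos hp3] at h
      have := ite_nonneg (a := p2)
      linarith
  · rintro ⟨ha, h2, h3⟩
    rw [if_pos ha, if_congr (show b ↔ p2 from ⟨hb, h2⟩) rfl rfl,
      if_congr (show c ↔ p3 from ⟨hc, h3⟩) rfl rfl]

lemma count_aux (hd : 1 ≤ d) (A C : ℕ → Prop) [∀ n, Decidable (A n)] [∀ n, Decidable (C n)]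
    (f1 : ∀ j, j + 1 < d → C j → A (j + 1))
    (f2 : ∀ j, j + 1 < d → A j → A (j + 1) → C j) :
    ∑ k ∈ Finset.range d,
      ((if ¬A k ∧ ¬(k < d - 1 ∧ (A k ∨ C k)) ∧ ¬(1 ≤ k ∧ C (k - 1)) then 1 else 0)
        + (if A k ∧ (k < d - 1 → k < d - 1 ∧ (A k ∨ C k)) ∧ (1 ≤ k → 1 ≤ k ∧ C (k - 1))
            then 1 else 0)
        + (if 1 ≤ k ∧ ¬A (k - 1) ∧ A k then 1 else 0)) = d := by
  set g : ℕ → ℕ := fun k =>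
      (if ¬A k ∧ ¬(k < d - 1 ∧ (A k ∨ C k)) ∧ ¬(1 ≤ k ∧ C (k - 1)) then 1 else 0)
        + (if A k ∧ (k < d - 1 → k < d - 1 ∧ (A k ∨ C k)) ∧ (1 ≤ k → 1 ≤ k ∧ C (k - 1))
            then 1 else 0)
        + (if 1 ≤ k ∧ ¬A (k - 1) ∧ A k then 1 else 0) with hg
  have key : ∀ n, n < d →
      g n + (if 1 ≤ n + 1 ∧ n + 1 < d ∧ ¬A n ∧ C n then 1 else 0)
      = (if 1 ≤ n ∧ n < d ∧ ¬A (n - 1) ∧ C (n - 1) then 1 else 0) + 1 := by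
    intro n hn
    have harith : (n + 1 < d) ↔ (n < d - 1) := by omega
    simp only [hg]
    by_cases hA : A n
    · by_cases h0 : 1 ≤ n
      · by_cases hA' : A (n - 1)
        · have hC : C (n - 1) := f2 (n - 1) (by omega) hA'
            (by rwa [show n - 1 + 1 = n by omega])
          simp [hA, h0, hA', hC, hn]
        · by_cases hC : C (n - 1)
          · simp [hA, h0, hA', hC, hn]
          · simp [hA, h0, hA', hC, hn]
      · simp [hA, h0, hn]
    · by_cases h0 : 1 ≤ n
      · by_cases hC' : C (n - 1)
        · exfalso
          apply hA
          have := f1 (n - 1) (by omega) hC'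
          rwa [show n - 1 + 1 = n by omega] at this
        · by_cases hc1 : n < d - 1 <;> by_cases hc2 : C n <;>
            simp [hA, h0, hC', hc1, hc2, hn, harith]
      · by_cases hc1 : n < d - 1 <;> by_cases hc2 : C n <;>
          simp [hA, h0, hc1, hc2, hn, harith]
  have main : ∀ n, n ≤ d → (∑ k ∈ Finset.range n, g k)
      + (if 1 ≤ n ∧ n < d ∧ ¬A (n - 1) ∧ C (n - 1) then 1 else 0) = n := by
    intro n
    induction n with
    | zero => intro _; simp
    | succ m ih =>
      intro hm
      have h1 := ih (by omega)
      have h2 := key m (by omega)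
      rw [Finset.sum_range_succ]
      simp only [Nat.add_sub_cancel]
      omega
  have hfin := main d le_rfl
  rw [if_neg (by rintro ⟨-, h, -⟩; exact absurd h (lt_irrefl d))] at hfin
  simpa using hfin

end PellProof

/-- For `d ≥ 1`, the pellytope `𝒫_d` is a simple polytope: every extreme point of `𝒫_d`
belongs to exactly `d` of the `3d-1` facets `F_1, …, F_{3d-1}`, where
`F_j = {x ∈ 𝒫_d : ⟨V_j, x⟩ = min_{y ∈ 𝒫_d} ⟨V_j, y⟩}`. -/
theorem pellytope_simple (d : ℕ) (hd : 1 ≤ d) (x : Fin d → ℝ)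
    (hx : x ∈ Set.extremePoints ℝ (pellytope d)) :
    {j : Fin (3 * d - 1) | x ∈ pellFace d j.val}.ncard = d := by
  classical
  obtain ⟨p, q, hpv, hqv, hsum⟩ := PellProof.exists_vertex_decomp hx
  have hxP : x ∈ pellytope d := hx.1
  have f1 : ∀ j, j + 1 < d → (q j = stdBasisVec d j + stdBasisVec d (j + 1)) →
      p (j + 1) = stdBasisVec d (j + 1) := by
    intro j hj hC
    rcases hpv (j + 1) hj with h | h
    · exact absurd h (PellProof.constraint3 hpv hqv hsum hx j (by omega) hC)
    · exact h
  have f2 : ∀ j, j + 1 < d → p j = stdBasisVec d j → p (j + 1) = stdBasisVec d (j + 1) →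
      q j = stdBasisVec d j + stdBasisVec d (j + 1) := by
    intro j hj hA hA1
    rcases hqv j (by omega) with h | h | h
    · exact absurd h (PellProof.constraint1 hpv hqv hsum hx j (by omega) hA)
    · exact absurd hA1 (PellProof.constraint4 hpv hqv hsum hx j (by omega) h)
    · exact h
  have hBiff : ∀ j, j < d - 1 → ((q j ≠ 0) ↔ (p j = stdBasisVec d j ∨
      q j = stdBasisVec d j + stdBasisVec d (j + 1))) := by
    intro j hj
    constructor
    · intro hne
      rcases hqv j hj with h | h | h
      · exact absurd h hne
      · left
        rcases hpv j (by omega) with h' | h'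
        · exact absurd h' (PellProof.constraint2 hpv hqv hsum hx j hj h)
        · exact h'
      · right; exact h
    · rintro (hA | hC)
      · exact PellProof.constraint1 hpv hqv hsum hx j hj hA
      · rw [hC]
        exact PellProof.eB_ne_zero (by omega)
  have hcond3 : ∀ k, ((1 ≤ k ∧ q (k - 1) = stdBasisVec d (k - 1) + stdBasisVec d (k - 1 + 1))
      ↔ (1 ≤ k ∧ q (k - 1) = stdBasisVec d (k - 1) + stdBasisVec d k)) := by
    intro k
    by_cases h0 : 1 ≤ k
    · rw [show k - 1 + 1 = k by omega]
    · constructor <;> (rintro ⟨h, -⟩; exact absurd h h0)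
  have hcoord : ∀ k, ∀ hk : k < d, x ⟨k, hk⟩
      = (if p k = stdBasisVec d k then (1:ℝ) else 0)
        + (if k < d - 1 ∧ (p k = stdBasisVec d k ∨
            q k = stdBasisVec d k + stdBasisVec d (k + 1)) then (1:ℝ) else 0)
        + (if 1 ≤ k ∧ q (k - 1) = stdBasisVec d (k - 1) + stdBasisVec d (k - 1 + 1)
            then (1:ℝ) else 0) := by
    intro k hk
    have hmid : (if k < d - 1 ∧ q k ≠ 0 then (1:ℝ) else 0)
        = if k < d - 1 ∧ (p k = stdBasisVec d k ∨
            q k = stdBasisVec d k + stdBasisVec d (k + 1)) then (1:ℝ) else 0 := by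
      by_cases hkd : k < d - 1
      · by_cases hB : q k ≠ 0
        · rw [if_pos ⟨hkd, hB⟩, if_pos ⟨hkd, (hBiff k hkd).1 hB⟩]
        · rw [if_neg (fun h => hB h.2), if_neg (fun h => hB ((hBiff k hkd).2 h.2))]
      · rw [if_neg (fun h => hkd h.1), if_neg (fun h => hkd h.1)]
    have hthird : (if 1 ≤ k ∧ q (k - 1) = stdBasisVec d (k - 1) + stdBasisVec d (k - 1 + 1)
          then (1:ℝ) else 0)
        = if 1 ≤ k ∧ q (k - 1) = stdBasisVec d (k - 1) + stdBasisVec d k then (1:ℝ) else 0 :=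
      if_congr (hcond3 k) rfl rfl
    rw [← hsum, PellProof.coord p q hpv hqv hk, hmid, ← hthird]
  -- indicator identities for the three families of faces
  have hiff1 : ∀ k, k < d → ((if x ∈ pellFace d k then (1:ℕ) else 0)
      = if (¬(p k = stdBasisVec d k)
          ∧ ¬(k < d - 1 ∧ (p k = stdBasisVec d k ∨
              q k = stdBasisVec d k + stdBasisVec d (k + 1)))
          ∧ ¬(1 ≤ k ∧ q (k - 1) = stdBasisVec d (k - 1) + stdBasisVec d (k - 1 + 1)))
          then 1 else 0) := by
    intro k hk
    refine if_congr ?_ rfl rfl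
    rw [PellProof.face1 hk hxP, hcoord k hk]
    constructor
    · intro h
      exact PellProof.sum3_eq_zero h
    · rintro ⟨h1, h2, h3⟩
      rw [if_neg h1, if_neg h2, if_neg h3]
      norm_num
  have hiff2 : ∀ k, k < d → ((if x ∈ pellFace d (d + k) then (1:ℕ) else 0)
      = if ((p k = stdBasisVec d k)
          ∧ (k < d - 1 → k < d - 1 ∧ (p k = stdBasisVec d k ∨
              q k = stdBasisVec d k + stdBasisVec d (k + 1)))
          ∧ (1 ≤ k → 1 ≤ k ∧ q (k - 1) = stdBasisVec d (k - 1) + stdBasisVec d (k - 1 + 1)))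
          then 1 else 0) := by
    intro k hk
    refine if_congr ?_ rfl rfl
    rw [PellProof.face2 hk hxP, hcoord k hk]
    exact PellProof.sum3_eq_max (fun h => h.1) (fun h => h.1)
  have hiff3 : ∀ k, k + 1 < d → ((if x ∈ pellFace d (2 * d + k) then (1:ℕ) else 0)
      = if (¬(p k = stdBasisVec d k) ∧ p (k + 1) = stdBasisVec d (k + 1)) then 1 else 0) := by
    intro k hk
    have hkd : k < d - 1 := by omega
    refine if_congr ?_ rfl rfl
    rw [PellProof.face3 hk hxP]
    have hc1 := hcoord k (by omega)
    have hc2 := hcoord (k + 1) hk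
    simp only [Nat.add_sub_cancel] at hc2
    -- bounds
    have bs : (0:ℝ) ≤ if k + 1 < d - 1 then (1:ℝ) else 0 := PellProof.ite_nonneg
    have bs1 : (if k + 1 < d - 1 then (1:ℝ) else 0) ≤ 1 := PellProof.ite_le_one
    have bβ' : (if k + 1 < d - 1 ∧ (p (k + 1) = stdBasisVec d (k + 1) ∨
          q (k + 1) = stdBasisVec d (k + 1) + stdBasisVec d (k + 1 + 1)) then (1:ℝ) else 0)
        ≤ if k + 1 < d - 1 then (1:ℝ) else 0 := PellProof.ite_le_ite (fun h => h.1)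
    have bγ : (0:ℝ) ≤ if 1 ≤ k ∧ q (k - 1) = stdBasisVec d (k - 1) + stdBasisVec d (k - 1 + 1)
        then (1:ℝ) else 0 := PellProof.ite_nonneg
    have bγ1 : (if 1 ≤ k ∧ q (k - 1) = stdBasisVec d (k - 1) + stdBasisVec d (k - 1 + 1)
        then (1:ℝ) else 0) ≤ 1 := PellProof.ite_le_one
    constructor
    · intro h
      by_cases hAk : p k = stdBasisVec d k <;>
        by_cases hAk1 : p (k + 1) = stdBasisVec d (k + 1)
      · exfalso
        have hCk : q k = stdBasisVec d k + stdBasisVec d (k + 1) := f2 k hk hAk hAk1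
        have eα : (if p k = stdBasisVec d k then (1:ℝ) else 0) = 1 := if_pos hAk
        have eβ : (if k < d - 1 ∧ (p k = stdBasisVec d k ∨
            q k = stdBasisVec d k + stdBasisVec d (k + 1)) then (1:ℝ) else 0) = 1 :=
          if_pos ⟨hkd, Or.inl hAk⟩
        have eα' : (if p (k + 1) = stdBasisVec d (k + 1) then (1:ℝ) else 0) = 1 := if_pos hAk1
        have eγ' : (if 1 ≤ k + 1 ∧ q k = stdBasisVec d k + stdBasisVec d (k + 1)
            then (1:ℝ) else 0) = 1 := if_pos ⟨by omega, hCk⟩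
        linarith [h, hc1, hc2]
      · exfalso
        have hnC : ¬(q k = stdBasisVec d k + stdBasisVec d (k + 1)) :=
          fun hC => hAk1 (f1 k hk hC)
        have eα : (if p k = stdBasisVec d k then (1:ℝ) else 0) = 1 := if_pos hAk
        have eβ : (if k < d - 1 ∧ (p k = stdBasisVec d k ∨
            q k = stdBasisVec d k + stdBasisVec d (k + 1)) then (1:ℝ) else 0) = 1 :=
          if_pos ⟨hkd, Or.inl hAk⟩
        have eα' : (if p (k + 1) = stdBasisVec d (k + 1) then (1:ℝ) else 0) = 0 := if_neg hAk1
        have eγ' : (if 1 ≤ k + 1 ∧ q k = stdBasisVec d k + stdBasisVec d (k + 1)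
            then (1:ℝ) else 0) = 0 := if_neg (fun hh => hnC hh.2)
        linarith [h, hc1, hc2]
      · exact ⟨hAk, hAk1⟩
      · exfalso
        have hnC : ¬(q k = stdBasisVec d k + stdBasisVec d (k + 1)) :=
          fun hC => hAk1 (f1 k hk hC)
        have eα : (if p k = stdBasisVec d k then (1:ℝ) else 0) = 0 := if_neg hAk
        have eβ : (if k < d - 1 ∧ (p k = stdBasisVec d k ∨
            q k = stdBasisVec d k + stdBasisVec d (k + 1)) then (1:ℝ) else 0) = 0 :=
          if_neg (fun hh => (hh.2).elim hAk hnC)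
        have eγ : (if 1 ≤ k ∧ q (k - 1) = stdBasisVec d (k - 1) + stdBasisVec d (k - 1 + 1)
            then (1:ℝ) else 0) = 0 := by
          refine if_neg ?_
          rintro ⟨h0, hCC⟩
          exact hAk (by
            have := f1 (k - 1) (by omega) hCC
            rwa [show k - 1 + 1 = k by omega] at this)
        have eα' : (if p (k + 1) = stdBasisVec d (k + 1) then (1:ℝ) else 0) = 0 := if_neg hAk1
        have eγ' : (if 1 ≤ k + 1 ∧ q k = stdBasisVec d k + stdBasisVec d (k + 1)
            then (1:ℝ) else 0) = 0 := if_neg (fun hh => hnC hh.2)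
        linarith [h, hc1, hc2]
    · rintro ⟨hAk, hAk1⟩
      have eα : (if p k = stdBasisVec d k then (1:ℝ) else 0) = 0 := if_neg hAk
      have eγ : (if 1 ≤ k ∧ q (k - 1) = stdBasisVec d (k - 1) + stdBasisVec d (k - 1 + 1)
          then (1:ℝ) else 0) = 0 := by
        refine if_neg ?_
        rintro ⟨h0, hCC⟩
        exact hAk (by
          have := f1 (k - 1) (by omega) hCC
          rwa [show k - 1 + 1 = k by omega] at this)
      have eα' : (if p (k + 1) = stdBasisVec d (k + 1) then (1:ℝ) else 0) = 1 := if_pos hAk1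
      have eβ' : (if k + 1 < d - 1 ∧ (p (k + 1) = stdBasisVec d (k + 1) ∨
            q (k + 1) = stdBasisVec d (k + 1) + stdBasisVec d (k + 1 + 1)) then (1:ℝ) else 0)
          = if k + 1 < d - 1 then (1:ℝ) else 0 := by
        by_cases hs : k + 1 < d - 1
        · rw [if_pos ⟨hs, Or.inl hAk1⟩, if_pos hs]
        · rw [if_neg (fun hh => hs hh.1), if_neg hs]
      have eβγ : (if k < d - 1 ∧ (p k = stdBasisVec d k ∨
            q k = stdBasisVec d k + stdBasisVec d (k + 1)) then (1:ℝ) else 0)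
          = if 1 ≤ k + 1 ∧ q k = stdBasisVec d k + stdBasisVec d (k + 1) then (1:ℝ) else 0 := by
        by_cases hCk : q k = stdBasisVec d k + stdBasisVec d (k + 1)
        · rw [if_pos ⟨hkd, Or.inr hCk⟩, if_pos ⟨by omega, hCk⟩]
        · rw [if_neg (fun hh => hCk ((hh.2).resolve_left hAk)), if_neg (fun hh => hCk hh.2)]
      linarith [hc1, hc2]
  -- counting
  have hset : {j : Fin (3 * d - 1) | x ∈ pellFace d j.val}
      = ↑(Finset.filter (fun j : Fin (3 * d - 1) => x ∈ pellFace d j.val) Finset.univ) := by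
    ext j
    simp
  rw [hset, Set.ncard_coe_finset, Finset.card_filter]
  rw [Fin.sum_univ_eq_sum_range (fun n => if x ∈ pellFace d n then (1:ℕ) else 0) (3 * d - 1)]
  have hsplit : ∑ n ∈ Finset.range (3 * d - 1), (if x ∈ pellFace d n then (1:ℕ) else 0)
      = (∑ n ∈ Finset.range d, (if x ∈ pellFace d n then (1:ℕ) else 0))
        + (∑ n ∈ Finset.range d, (if x ∈ pellFace d (d + n) then (1:ℕ) else 0))
        + (∑ n ∈ Finset.range (d - 1), (if x ∈ pellFace d (2 * d + n) then (1:ℕ) else 0)) := by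
    rw [Finset.range_eq_Ico,
      ← Finset.sum_Ico_consecutive _ (by omega : 0 ≤ 2 * d) (by omega : 2 * d ≤ 3 * d - 1),
      ← Finset.sum_Ico_consecutive _ (by omega : 0 ≤ d) (by omega : d ≤ 2 * d),
      Finset.sum_Ico_eq_sum_range, Finset.sum_Ico_eq_sum_range, Finset.sum_Ico_eq_sum_range]
    simp only [Nat.sub_zero, Nat.zero_add]
    rw [show 2 * d - d = d by omega, show 3 * d - 1 - 2 * d = d - 1 by omega]
  rw [hsplit]
  rw [Finset.sum_congr rfl (fun n hn => hiff1 n (Finset.mem_range.1 hn)),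
    Finset.sum_congr rfl (fun n hn => hiff2 n (Finset.mem_range.1 hn)),
    Finset.sum_congr rfl (fun n hn => hiff3 n (by
      have := Finset.mem_range.1 hn; omega))]
  -- reindex the third sum
  have hshift := Finset.sum_range_succ' (fun k =>
    if 1 ≤ k ∧ ¬(p (k - 1) = stdBasisVec d (k - 1)) ∧ p k = stdBasisVec d k
      then (1:ℕ) else 0) (d - 1)
  rw [show d - 1 + 1 = d by omega] at hshift
  simp only [Nat.add_sub_cancel] at hshift
  have hzero : (if 1 ≤ 0 ∧ ¬(p (0 - 1) = stdBasisVec d (0 - 1)) ∧ p 0 = stdBasisVec d 0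
      then (1:ℕ) else 0) = 0 := if_neg (fun hh => by omega)
  have hcongr3 : ∑ n ∈ Finset.range (d - 1),
      (if 1 ≤ n + 1 ∧ ¬(p n = stdBasisVec d n) ∧ p (n + 1) = stdBasisVec d (n + 1)
        then (1:ℕ) else 0)
      = ∑ n ∈ Finset.range (d - 1),
      (if ¬(p n = stdBasisVec d n) ∧ p (n + 1) = stdBasisVec d (n + 1) then (1:ℕ) else 0) :=
    Finset.sum_congr rfl (fun n _ => if_congr
      ⟨fun h => ⟨h.2.1, h.2.2⟩, fun h => ⟨by omega, h.1, h.2⟩⟩ rfl rfl)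
  have hcount := PellProof.count_aux hd (fun n => p n = stdBasisVec d n)
    (fun n => q n = stdBasisVec d n + stdBasisVec d (n + 1)) f1 f2
  rw [Finset.sum_add_distrib, Finset.sum_add_distrib] at hcount
  beta_reduce at hcount
  omega
end
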